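/- Let G be a connected graph, c ∈ Fix(s), and let I be a relative neighborhood of c in [−1,1] such that (x − c)(s(x) − x) ≤ 0 for all x ∈ I. Then for every x ∈ I^N, (x − c·𝟙)ᵀ D f(x) ≤ 0; equivalently, the Lyapunov function V(x) = ½ (x − c·𝟙)ᵀ D (x − c·𝟙) is non-increasing along the vector field f on I^N. -/

import Mathlib

/-!
Write `u = x - c·𝟙` and `v = s(x) - c·𝟙`. Monotonicity of `s` and the sign condition force
`s(y)` to lie between `c` and `y` on `I`, so `|v_j| ≤ |u_j|`. Since `D f(x) = A s(x) - D x`, the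
quantity to bound is `∑_{i ~ j} u_i (v_j - u_i) ≤ ∑_{i ~ j} (u_j² - u_i²) / 2`, and the
right-hand side vanishes by the symmetry of `A`.
-/

open Filter

/-- The vector field `f(x) = D⁻¹ A s(x) - x` of the nonlinear consensus dynamics:
`f(x)_i = (1/d_i) ∑_j a_ij s(x_j) - x_i`. -/
noncomputable def vecField {N : ℕ} (G : SimpleGraph (Fin N)) [DecidableRel G.Adj]
    (s : ℝ → ℝ) (x : Fin N → ℝ) : Fin N → ℝ :=
  fun i => (∑ j, G.adjMatrix ℝ i j * s (x j)) / (G.degree i : ℝ) - x i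

open Finset

theorem MonotoneOn.sq_sub_le_sq_sub_of_mul_le_zero {S : Set ℝ} {s : ℝ → ℝ}
    (hmono : MonotoneOn s S)
    {c y : ℝ} (hc : c ∈ S) (hfix : s c = c) (hy : y ∈ S) (hsy : (y - c) * (s y - y) ≤ 0) :
    (s y - c) ^ 2 ≤ (y - c) ^ 2 := by
  have hbetween : s y ∈ Set.uIcc c y := by
    rcases lt_trichotomy c y with hcy | rfl | hyc
    · exact Set.mem_uIcc_of_le (hfix ▸ hmono hc hy hcy.le) (by nlinarith)
    · simp [hfix]
    · exact Set.mem_uIcc_of_ge (by nlinarith) (hfix ▸ hmono hy hc hyc.le)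
  exact sq_le_sq.mpr (Set.abs_sub_left_of_mem_uIcc hbetween)

namespace SimpleGraph

variable {V : Type*} (G : SimpleGraph V) [DecidableRel G.Adj]

theorem adjMatrix_nonneg {α : Type*} [Zero α] [One α] [Preorder α] [ZeroLEOneClass α]
    (i j : V) :
    0 ≤ G.adjMatrix α i j := by
  rw [adjMatrix_apply]
  split_ifs
  exacts [zero_le_one, le_rfl]

variable [Fintype V]

theorem sum_sum_adjMatrix_mul_sub_eq_zero {α : Type*} [NonAssocRing α] (g : V → α) :
    ∑ i, ∑ j, G.adjMatrix α i j * (g j - g i) = 0 := by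
  simp only [mul_sub, sum_sub_distrib]
  rw [sub_eq_zero, sum_comm]
  simp only [G.isSymm_adjMatrix.apply]

theorem sum_sum_adjMatrix_mul_mul_sub_nonpos (u v : V → ℝ) (huv : ∀ j, v j ^ 2 ≤ u j ^ 2) :
    ∑ i, ∑ j, G.adjMatrix ℝ i j * (u i * (v j - u i)) ≤ 0 := by
  calc ∑ i, ∑ j, G.adjMatrix ℝ i j * (u i * (v j - u i))
      ≤ ∑ i, ∑ j, G.adjMatrix ℝ i j * (u j ^ 2 / 2 - u i ^ 2 / 2) := by
        gcongr with i _ j _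
        · exact G.adjMatrix_nonneg i j
        · nlinarith [huv j, sq_nonneg (u i - v j)]
    _ = 0 := G.sum_sum_adjMatrix_mul_sub_eq_zero fun i => u i ^ 2 / 2

end SimpleGraph

theorem degree_mul_vecField {N : ℕ} (G : SimpleGraph (Fin N)) [DecidableRel G.Adj]
    (s : ℝ → ℝ) (x : Fin N → ℝ) (i : Fin N) :
    (G.degree i : ℝ) * vecField G s x i = ∑ j, G.adjMatrix ℝ i j * (s (x j) - x i) := by
  have hsum (g : Fin N → ℝ) :
      ∑ j, G.adjMatrix ℝ i j * g j = ∑ j ∈ G.neighborFinset i, g j :=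
    G.adjMatrix_dotProduct i g
  simp only [vecField, hsum, sum_sub_distrib, sum_const, nsmul_eq_mul,
    G.card_neighborFinset_eq_degree]
  -- at an isolated vertex the junk value `_ / 0 = 0` is harmless: both sides vanish
  rcases eq_or_ne (G.degree i) 0 with hd | hd
  · simp [hd, card_eq_zero.mp ((G.card_neighborFinset_eq_degree i).trans hd)]
  · field_simp

theorem lyapunov_decrease_consistent_estimation_general {N : ℕ}
    (G : SimpleGraph (Fin N)) [DecidableRel G.Adj]
    (s : ℝ → ℝ)
    (hmono : MonotoneOn s (Set.Icc (-1 : ℝ) 1))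
    (c : ℝ) (hc : c ∈ Set.Icc (-1 : ℝ) 1) (hfix : s c = c)
    (I : Set ℝ)
    (hIsub : I ⊆ Set.Icc (-1 : ℝ) 1)
    (hcons : ∀ y ∈ I, (y - c) * (s y - y) ≤ 0) :
    ∀ x : Fin N → ℝ, (∀ i, x i ∈ I) →
      (∑ i, (G.degree i : ℝ) * (x i - c) * vecField G s x i) ≤ 0 := by
  intro x hx
  have hcontract : ∀ j, (s (x j) - c) ^ 2 ≤ (x j - c) ^ 2 := fun j =>
    hmono.sq_sub_le_sq_sub_of_mul_le_zero hc hfix (hIsub (hx j)) (hcons _ (hx j))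
  calc ∑ i, (G.degree i : ℝ) * (x i - c) * vecField G s x i
      = ∑ i, ∑ j, G.adjMatrix ℝ i j * ((x i - c) * ((s (x j) - c) - (x i - c))) := by
        refine sum_congr rfl fun i _ => ?_
        rw [mul_right_comm, degree_mul_vecField, sum_mul]
        exact sum_congr rfl fun j _ => by ring
    _ ≤ 0 := G.sum_sum_adjMatrix_mul_mul_sub_nonpos _ _ hcontract

/-- **Lyapunov decrease around a consistently estimated fixed point.** Let `c` be a
fixed point of `s` and `I ⊆ [-1,1]` a relative neighborhood of `c` on which
`(y - c)(s(y) - y) ≤ 0`. Then for every `x ∈ I^N`, `(x - c·𝟙)ᵀ D f(x) ≤ 0`, i.e. the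
Lyapunov function `V(x) = ½ (x - c·𝟙)ᵀ D (x - c·𝟙)` is non-increasing along `f`. -/
theorem lyapunov_decrease_consistent_estimation {N : ℕ} (hN : 2 ≤ N)
    (G : SimpleGraph (Fin N)) [DecidableRel G.Adj] (hconn : G.Connected)
    (s : ℝ → ℝ)
    (hmono : MonotoneOn s (Set.Icc (-1 : ℝ) 1))
    (hlip : ∃ K : NNReal, LipschitzOnWith K s (Set.Icc (-1 : ℝ) 1))
    (hmaps : Set.MapsTo s (Set.Icc (-1 : ℝ) 1) (Set.Icc (-1 : ℝ) 1))
    (c : ℝ) (hc : c ∈ Set.Icc (-1 : ℝ) 1) (hfix : s c = c)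
    (I : Set ℝ) (hI : I ∈ nhdsWithin c (Set.Icc (-1 : ℝ) 1))
    (hIsub : I ⊆ Set.Icc (-1 : ℝ) 1)
    (hcons : ∀ y ∈ I, (y - c) * (s y - y) ≤ 0) :
    ∀ x : Fin N → ℝ, (∀ i, x i ∈ I) →
      (∑ i, (G.degree i : ℝ) * (x i - c) * vecField G s x i) ≤ 0 :=
  lyapunov_decrease_consistent_estimation_general G s hmono c hc hfix I hIsub hcons
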